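/- arXiv:2410.15049 — 2 statements merged into one kernel-verified Lean document; each statement's English description precedes it below -/
import Mathlib

section
/- Almost everywhere, E[W·(A − p̃) | G] = 0; that is, the weighted centered treatment indicator has conditional mean zero given G. -/
open MeasureTheory

/-- `E[W·(A − p̃) | G] = 0` a.e.: the weighted centered treatment indicator
has conditional mean zero given `G`. -/
theorem weighted_centered_treatment_condexp_zero
    {Ω : Type*} (G : MeasurableSpace Ω) [F : MeasurableSpace Ω] (μ : Measure Ω) [IsProbabilityMeasure μ]
    (hG : G ≤ F)
    (A : Ω → ℝ) (hA_meas : Measurable A) (hA01 : ∀ ω, A ω = 0 ∨ A ω = 1)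
    (p : Ω → ℝ) (hp_meas : Measurable[G] p) (hp_ver : p =ᵐ[μ] μ[A|G])
    (ε : ℝ) (hε : 0 < ε) (hpos : ∀ᵐ ω ∂μ, ε ≤ p ω ∧ p ω ≤ 1 - ε)
    (pt : Ω → ℝ) (hpt_meas : Measurable[G] pt) (hpt : ∀ ω, 0 < pt ω ∧ pt ω < 1)
    (W : Ω → ℝ)
    (hW : ∀ ω, W ω = A ω * pt ω / p ω + (1 - A ω) * (1 - pt ω) / (1 - p ω)) :
    μ[fun ω => W ω * (A ω - pt ω)|G] =ᵐ[μ] fun _ => (0 : ℝ) := by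
  set c : Ω → ℝ := fun ω => pt ω * (1 - pt ω) / p ω with hc
  set d : Ω → ℝ := fun ω => pt ω * (1 - pt ω) / (1 - p ω) with hd
  have hone : Measurable[G] (fun _ : Ω => (1 : ℝ)) := @measurable_const _ _ _ G _
  have hc_meas : Measurable[G] c := (hpt_meas.mul (hone.sub hpt_meas)).div hp_meas
  have hd_meas : Measurable[G] d := (hpt_meas.mul (hone.sub hpt_meas)).div (hone.sub hp_meas)
  have hcd_meas : Measurable[G] (fun ω => c ω + d ω) := hc_meas.add hd_meas
  -- pointwise rewriting
  have hfun : (fun ω => W ω * (A ω - pt ω)) = fun ω => (fun ω => c ω + d ω) ω * A ω - d ω := by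
    funext ω
    rcases hA01 ω with h | h <;> rw [hW ω, h, hc, hd] <;> ring
  -- bounds for pt(1-pt)
  have hpt_bd : ∀ ω, |pt ω * (1 - pt ω)| ≤ 1 := by
    intro ω
    rcases hpt ω with ⟨h0, h1⟩
    rw [abs_le]
    constructor <;> nlinarith
  have hbd : ∀ᵐ ω ∂μ, |c ω| ≤ 1 / ε ∧ |d ω| ≤ 1 / ε := by
    filter_upwards [hpos] with ω ⟨hε1, hε2⟩
    have hp0 : 0 < p ω := lt_of_lt_of_le hε hε1
    have hp1 : 0 < 1 - p ω := lt_of_lt_of_le hε (by linarith)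
    constructor
    · rw [hc, abs_div, abs_of_pos hp0]
      exact div_le_div₀ (by positivity) (hpt_bd ω) hε hε1
    · rw [hd, abs_div, abs_of_pos hp1]
      exact div_le_div₀ (by positivity) (hpt_bd ω) hε (by linarith)
  have hA_bd : ∀ ω, |A ω| ≤ 1 := by
    intro ω; rcases hA01 ω with h | h <;> rw [h] <;> norm_num
  -- integrability
  have hA_int : Integrable A μ :=
    Integrable.mono' (integrable_const 1) (hA_meas.aestronglyMeasurable)
      (Filter.Eventually.of_forall hA_bd)
  have hd_int : Integrable d μ :=
    Integrable.mono' (integrable_const (1 / ε)) ((hd_meas.mono hG le_rfl).aestronglyMeasurable)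
      (hbd.mono fun ω h => h.2)
  have h1_int : Integrable ((fun ω => c ω + d ω) * A) μ := by
    refine Integrable.mono' (integrable_const (2 / ε))
      (((hcd_meas.mono hG le_rfl).mul hA_meas).aestronglyMeasurable) ?_
    filter_upwards [hbd] with ω ⟨h1, h2⟩
    calc |((fun ω => c ω + d ω) * A) ω| = |c ω + d ω| * |A ω| := by simp [abs_mul]
      _ ≤ (1 / ε + 1 / ε) * 1 := by
          apply mul_le_mul _ (hA_bd ω) (abs_nonneg _) (by positivity)
          exact (abs_add_le _ _).trans (add_le_add h1 h2)
      _ = 2 / ε := by ring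
  have hsub_int : Integrable (fun ω => (fun ω => c ω + d ω) ω * A ω - d ω) μ := by
    exact h1_int.sub hd_int
  -- compute the conditional expectation
  have hmul : μ[(fun ω => c ω + d ω) * A|G] =ᵐ[μ] (fun ω => c ω + d ω) * μ[A|G] :=
    condExp_mul_of_stronglyMeasurable_left hcd_meas.stronglyMeasurable h1_int hA_int
  have hdce : μ[d|G] =ᵐ[μ] d :=
    Filter.EventuallyEq.of_eq (condExp_of_stronglyMeasurable hG hd_meas.stronglyMeasurable hd_int)
  have hsub : μ[fun ω => (fun ω => c ω + d ω) ω * A ω - d ω|G]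
      =ᵐ[μ] μ[(fun ω => c ω + d ω) * A|G] - μ[d|G] := condExp_sub h1_int hd_int G
  rw [hfun]
  refine hsub.trans ?_
  have : ((fun ω => c ω + d ω) * μ[A|G] - d : Ω → ℝ) =ᵐ[μ] fun _ => (0 : ℝ) := by
    filter_upwards [hp_ver, hpos] with ω hver ⟨hε1, hε2⟩
    have hp0 : p ω ≠ 0 := by nlinarith
    have hp1 : 1 - p ω ≠ 0 := by
      have : 0 < 1 - p ω := lt_of_lt_of_le hε (by linarith)
      positivity
    simp only [Pi.sub_apply, Pi.mul_apply, Pi.add_apply, ← hver, hc, hd]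
    field_simp
    ring
  exact (hmul.sub hdce).trans this
end

section
/- Suppose the causal excursion effect model is correctly specified: there exist a bounded G-measurable feature vector f : Ω → ℝ^L and a parameter β* ∈ ℝ^L such that, almost everywhere, E[Y·A | G]/p − E[Y·(1 − A) | G]/(1 − p) = f^T β*. Then for EVERY bounded G-measurable working outcome model η : Ω → ℝ, the population estimating function of the weighted and centered least squares criterion vanishes at β*: E[ W·(A − p̃)·f·( Y − η − (A − p̃)·f^T β* ) ] = 0 ∈ ℝ^L. In other words, the Stage-2 estimating equation is unbiased for β* regardless of the (possibly misspecified) Stage-1 nuisance function η. -/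
open MeasureTheory

/-- If the causal excursion effect model is correctly specified, i.e.
`E[Y·A | G]/p − E[Y·(1−A) | G]/(1−p) = f^T β*` a.e. for a bounded `G`-measurable feature
vector `f` and some `β* ∈ ℝ^L`, then for every bounded `G`-measurable working outcome model
`η` the population estimating function of the weighted and centered least squares criterion
vanishes at `β*`: `E[W·(A − p̃)·f·(Y − η − (A − p̃)·f^T β*)] = 0 ∈ ℝ^L`. -/
theorem wcls_estimating_equation_unbiased
    {Ω : Type*} (G : MeasurableSpace Ω) [F : MeasurableSpace Ω] (μ : Measure Ω) [IsProbabilityMeasure μ]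
    (hG : G ≤ F)
    (A : Ω → ℝ) (hA_meas : Measurable A) (hA01 : ∀ ω, A ω = 0 ∨ A ω = 1)
    (p : Ω → ℝ) (hp_meas : Measurable[G] p) (hp_ver : p =ᵐ[μ] μ[A|G])
    (ε : ℝ) (hε : 0 < ε) (hpos : ∀ᵐ ω ∂μ, ε ≤ p ω ∧ p ω ≤ 1 - ε)
    (pt : Ω → ℝ) (hpt_meas : Measurable[G] pt) (hpt : ∀ ω, 0 < pt ω ∧ pt ω < 1)
    (W : Ω → ℝ)
    (hW : ∀ ω, W ω = A ω * pt ω / p ω + (1 - A ω) * (1 - pt ω) / (1 - p ω))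
    (Y : Ω → ℝ) (hY_meas : Measurable Y) (CY : ℝ) (hY_bdd : ∀ ω, |Y ω| ≤ CY)
    (L : ℕ) (f : Ω → Fin L → ℝ) (hf_meas : Measurable[G] f)
    (Cf : ℝ) (hf_bdd : ∀ ω l, |f ω l| ≤ Cf)
    (βstar : Fin L → ℝ)
    (hmodel : (fun ω => (μ[fun ω' => Y ω' * A ω'|G]) ω / p ω
        - (μ[fun ω' => Y ω' * (1 - A ω')|G]) ω / (1 - p ω))
      =ᵐ[μ] fun ω => ∑ l, f ω l * βstar l)
    (η : Ω → ℝ) (hη_meas : Measurable[G] η) (Cη : ℝ) (hη_bdd : ∀ ω, |η ω| ≤ Cη) :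
    ∀ l : Fin L,
      ∫ ω, W ω * (A ω - pt ω) * f ω l
          * (Y ω - η ω - (A ω - pt ω) * ∑ l', f ω l' * βstar l') ∂μ = 0 := by
  intro l
  have hΩ : Nonempty Ω := by
    by_contra h
    have h0 : μ Set.univ = 0 := by
      rw [Set.univ_eq_empty_iff.2 (not_nonempty_iff.1 h)]; simp
    rw [measure_univ] at h0; exact one_ne_zero h0
  -- abbreviations
  set c : Ω → ℝ := fun ω => ∑ l', f ω l' * βstar l' with hc_def
  set q : Ω → ℝ := fun ω => pt ω * (1 - pt ω) * f ω l with hq_def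
  set g1 : Ω → ℝ := fun ω => q ω / p ω with hg1_def
  set g2 : Ω → ℝ := fun ω => -(q ω / (1 - p ω)) with hg2_def
  set g3 : Ω → ℝ := fun ω => q ω * (-(η ω) - (1 - pt ω) * c ω) / p ω with hg3_def
  set g4 : Ω → ℝ := fun ω => q ω * (η ω - pt ω * c ω) / (1 - p ω) with hg4_def
  -- basic bounds
  have hCf0 : 0 ≤ Cf := (abs_nonneg _).trans (hf_bdd hΩ.some l)
  set Cc : ℝ := ∑ l' : Fin L, Cf * |βstar l'| with hCc_def
  have hc_bdd : ∀ ω, |c ω| ≤ Cc := by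
    intro ω
    refine (Finset.abs_sum_le_sum_abs _ _).trans (Finset.sum_le_sum fun i _ => ?_)
    rw [abs_mul]
    exact mul_le_mul_of_nonneg_right (hf_bdd ω i) (abs_nonneg _)
  have hq_bdd : ∀ ω, |q ω| ≤ Cf := by
    intro ω
    obtain ⟨h0, h1⟩ := hpt ω
    have hptabs : |pt ω * (1 - pt ω)| ≤ 1 := by
      rw [abs_of_nonneg (by nlinarith)]; nlinarith
    calc |q ω| = |pt ω * (1 - pt ω)| * |f ω l| := abs_mul _ _
      _ ≤ 1 * Cf := mul_le_mul hptabs (hf_bdd ω l) (abs_nonneg _) one_pos.le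
      _ = Cf := one_mul _
  have habsA : ∀ ω, |A ω| ≤ 1 := by
    intro ω; rcases hA01 ω with h | h <;> rw [h] <;> norm_num
  have habsA' : ∀ ω, |1 - A ω| ≤ 1 := by
    intro ω; rcases hA01 ω with h | h <;> rw [h] <;> norm_num
  -- measurability
  have hfl_meas : Measurable[G] fun ω => f ω l := (measurable_pi_apply l).comp hf_meas
  have hc_meas : Measurable[G] c :=
    Finset.measurable_sum Finset.univ fun i _ =>
      ((measurable_pi_apply i).comp hf_meas).mul_const _
  have hq_meas : Measurable[G] q :=
    (hpt_meas.mul (hpt_meas.const_sub 1)).mul hfl_meas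
  have hg1_meas : Measurable[G] g1 := hq_meas.div hp_meas
  have hg2_meas : Measurable[G] g2 := (hq_meas.div (hp_meas.const_sub 1)).neg
  have hg3_meas : Measurable[G] g3 :=
    (hq_meas.mul (hη_meas.neg.sub ((hpt_meas.const_sub 1).mul hc_meas))).div
      hp_meas
  have hg4_meas : Measurable[G] g4 :=
    (hq_meas.mul (hη_meas.sub (hpt_meas.mul hc_meas))).div
      (hp_meas.const_sub 1)
  -- a.e. bounds on the g's
  have hg1_bdd : ∀ᵐ ω ∂μ, |g1 ω| ≤ Cf / ε := by
    filter_upwards [hpos] with ω hω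
    rw [hg1_def, abs_div]
    exact div_le_div₀ hCf0 (hq_bdd ω) hε (by rw [abs_of_pos (by linarith)]; exact hω.1)
  have hg2_bdd : ∀ᵐ ω ∂μ, |g2 ω| ≤ Cf / ε := by
    filter_upwards [hpos] with ω hω
    rw [hg2_def, abs_neg, abs_div]
    exact div_le_div₀ hCf0 (hq_bdd ω) hε (by rw [abs_of_pos (by linarith)]; linarith [hω.2])
  have hnum_bdd : ∀ ω, |q ω * (-(η ω) - (1 - pt ω) * c ω)| ≤ Cf * (Cη + Cc) := by
    intro ω
    obtain ⟨h0, h1⟩ := hpt ω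
    rw [abs_mul]
    refine mul_le_mul (hq_bdd ω) ?_ (abs_nonneg _) hCf0
    calc |-(η ω) - (1 - pt ω) * c ω| ≤ |(-(η ω))| + |(1 - pt ω) * c ω| := abs_sub _ _
      _ = |η ω| + |1 - pt ω| * |c ω| := by rw [abs_neg, abs_mul]
      _ ≤ Cη + 1 * Cc := by
          refine add_le_add (hη_bdd ω) (mul_le_mul ?_ (hc_bdd ω) (abs_nonneg _) one_pos.le)
          rw [abs_of_pos (by linarith)]; linarith
      _ = Cη + Cc := by ring
  have hnum_bdd' : ∀ ω, |q ω * (η ω - pt ω * c ω)| ≤ Cf * (Cη + Cc) := by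
    intro ω
    obtain ⟨h0, h1⟩ := hpt ω
    rw [abs_mul]
    refine mul_le_mul (hq_bdd ω) ?_ (abs_nonneg _) hCf0
    calc |η ω - pt ω * c ω| ≤ |η ω| + |pt ω * c ω| := abs_sub _ _
      _ = |η ω| + |pt ω| * |c ω| := by rw [abs_mul]
      _ ≤ Cη + 1 * Cc := by
          refine add_le_add (hη_bdd ω) (mul_le_mul ?_ (hc_bdd ω) (abs_nonneg _) one_pos.le)
          rw [abs_of_pos h0]; linarith
      _ = Cη + Cc := by ring
  have hg3_bdd : ∀ᵐ ω ∂μ, |g3 ω| ≤ Cf * (Cη + Cc) / ε := by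
    filter_upwards [hpos] with ω hω
    rw [hg3_def, abs_div]
    exact div_le_div₀ ((abs_nonneg _).trans (hnum_bdd ω)) (hnum_bdd ω) hε
      (by rw [abs_of_pos (by linarith)]; exact hω.1)
  have hg4_bdd : ∀ᵐ ω ∂μ, |g4 ω| ≤ Cf * (Cη + Cc) / ε := by
    filter_upwards [hpos] with ω hω
    rw [hg4_def, abs_div]
    exact div_le_div₀ ((abs_nonneg _).trans (hnum_bdd' ω)) (hnum_bdd' ω) hε
      (by rw [abs_of_pos (by linarith)]; linarith [hω.2])
  -- bounds on the X's
  have hCY0 : 0 ≤ CY := (abs_nonneg _).trans (hY_bdd hΩ.some)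
  have hX1_bdd : ∀ ω, |Y ω * A ω| ≤ CY := fun ω => by
    rw [abs_mul]
    calc |Y ω| * |A ω| ≤ CY * 1 := mul_le_mul (hY_bdd ω) (habsA ω) (abs_nonneg _) hCY0
      _ = CY := mul_one _
  have hX2_bdd : ∀ ω, |Y ω * (1 - A ω)| ≤ CY := fun ω => by
    rw [abs_mul]
    calc |Y ω| * |1 - A ω| ≤ CY * 1 := mul_le_mul (hY_bdd ω) (habsA' ω) (abs_nonneg _) hCY0
      _ = CY := mul_one _
  have hX1_meas : Measurable fun ω => Y ω * A ω := hY_meas.mul hA_meas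
  have hX2_meas : Measurable fun ω => Y ω * (1 - A ω) :=
    hY_meas.mul (measurable_const.sub hA_meas)
  have hX4_meas : Measurable fun ω => 1 - A ω := measurable_const.sub hA_meas
  -- generic integrability of products
  have int_mul : ∀ (g : Ω → ℝ), Measurable[G] g → ∀ (C : ℝ), (∀ᵐ ω ∂μ, |g ω| ≤ C) →
      ∀ (X : Ω → ℝ), AEStronglyMeasurable[F] X μ → ∀ (D : ℝ), (∀ᵐ ω ∂μ, |X ω| ≤ D) →
      Integrable (fun ω => g ω * X ω) μ := by
    intro g hg C hC X hX D hD
    refine ⟨?_, ?_⟩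
    · exact ((hg.mono hG le_rfl).aestronglyMeasurable).mul hX
    refine HasFiniteIntegral.of_bounded (C := C * D) ?_
    filter_upwards [hC, hD] with ω h1 h2
    rw [Real.norm_eq_abs, abs_mul]
    exact mul_le_mul h1 h2 (abs_nonneg _) ((abs_nonneg _).trans h1)
  -- key: ∫ g·X = ∫ g·E[X|G] for G-measurable a.e.-bounded g and bounded X
  have key : ∀ (g : Ω → ℝ), Measurable[G] g → ∀ (C : ℝ), (∀ᵐ ω ∂μ, |g ω| ≤ C) →
      ∀ (X : Ω → ℝ), Measurable X → ∀ (D : ℝ), (∀ ω, |X ω| ≤ D) →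
      ∫ ω, g ω * X ω ∂μ = ∫ ω, g ω * (μ[X|G]) ω ∂μ := by
    intro g hg C hC X hX D hD
    have hXint : Integrable X μ := by
      refine ⟨?_, ?_⟩
      · exact hX.aestronglyMeasurable
      exact HasFiniteIntegral.of_bounded (C := D)
          (Filter.Eventually.of_forall fun ω => by rw [Real.norm_eq_abs]; exact hD ω)
    have hgXint : Integrable (g * X) μ :=
      int_mul g hg C hC X hX.aestronglyMeasurable D
        (Filter.Eventually.of_forall hD)
    have hpull : μ[g * X|G] =ᵐ[μ] g * μ[X|G] :=
      condExp_mul_of_stronglyMeasurable_left hg.stronglyMeasurable hgXint hXint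
    calc ∫ ω, g ω * X ω ∂μ = ∫ ω, (g * X) ω ∂μ := rfl
      _ = ∫ ω, (μ[g * X|G]) ω ∂μ := (integral_condExp hG).symm
      _ = ∫ ω, (g * μ[X|G]) ω ∂μ := integral_congr_ae hpull
      _ = ∫ ω, g ω * (μ[X|G]) ω ∂μ := rfl
  -- pointwise decomposition of the integrand
  have hsplit : ∀ ω, W ω * (A ω - pt ω) * f ω l * (Y ω - η ω - (A ω - pt ω) * c ω)
      = g1 ω * (Y ω * A ω) + g2 ω * (Y ω * (1 - A ω)) + g3 ω * A ω + g4 ω * (1 - A ω) := by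
    intro ω
    rw [hW ω, hg1_def, hg2_def, hg3_def, hg4_def, hq_def]
    rcases hA01 ω with h | h <;> rw [h] <;> ring
  -- integrability of the pieces
  have hint1 : Integrable (fun ω => g1 ω * (Y ω * A ω)) μ :=
    int_mul g1 hg1_meas _ hg1_bdd _ hX1_meas.aestronglyMeasurable CY
      (Filter.Eventually.of_forall hX1_bdd)
  have hint2 : Integrable (fun ω => g2 ω * (Y ω * (1 - A ω))) μ :=
    int_mul g2 hg2_meas _ hg2_bdd _ hX2_meas.aestronglyMeasurable CY
      (Filter.Eventually.of_forall hX2_bdd)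
  have hint3 : Integrable (fun ω => g3 ω * A ω) μ :=
    int_mul g3 hg3_meas _ hg3_bdd _ hA_meas.aestronglyMeasurable 1
      (Filter.Eventually.of_forall habsA)
  have hint4 : Integrable (fun ω => g4 ω * (1 - A ω)) μ :=
    int_mul g4 hg4_meas _ hg4_bdd _ hX4_meas.aestronglyMeasurable 1
      (Filter.Eventually.of_forall habsA')
  -- integrability after conditioning
  have hintE : ∀ (g : Ω → ℝ), Measurable[G] g → ∀ (C : ℝ), (∀ᵐ ω ∂μ, |g ω| ≤ C) →
      ∀ (X : Ω → ℝ), Integrable (fun ω => g ω * (μ[X|G]) ω) μ := by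
    intro g hg C hC X
    refine Integrable.bdd_mul (c := C) integrable_condExp (hg.mono hG le_rfl).aestronglyMeasurable ?_
    filter_upwards [hC] with ω h; rwa [Real.norm_eq_abs]
  have hintE1 : Integrable (fun ω => g1 ω * (μ[fun ω' => Y ω' * A ω'|G]) ω) μ :=
    hintE g1 hg1_meas _ hg1_bdd _
  have hintE2 : Integrable (fun ω => g2 ω * (μ[fun ω' => Y ω' * (1 - A ω')|G]) ω) μ :=
    hintE g2 hg2_meas _ hg2_bdd _
  have hintE3 : Integrable (fun ω => g3 ω * (μ[A|G]) ω) μ :=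
    hintE g3 hg3_meas _ hg3_bdd _
  have hintE4 : Integrable (fun ω => g4 ω * (μ[fun ω' => 1 - A ω'|G]) ω) μ :=
    hintE g4 hg4_meas _ hg4_bdd _
  -- identify μ[1 - A|G]
  have hAint : Integrable A μ := by
    refine ⟨?_, ?_⟩
    · exact hA_meas.aestronglyMeasurable
    exact HasFiniteIntegral.of_bounded (C := 1)
        (Filter.Eventually.of_forall fun ω => by rw [Real.norm_eq_abs]; exact habsA ω)
  have hE4 : (μ[fun ω' => 1 - A ω'|G]) =ᵐ[μ] fun ω => 1 - p ω := by
    have h1 : μ[(fun _ => (1 : ℝ)) - A|G] =ᵐ[μ] μ[fun _ => (1 : ℝ)|G] - μ[A|G] :=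
      condExp_sub (integrable_const 1) hAint G
    have h2 : (μ[fun _ => (1 : ℝ)|G]) = fun _ => (1 : ℝ) := condExp_const hG 1
    have h3 : (fun ω' => 1 - A ω') = (fun _ => (1 : ℝ)) - A := by funext ω'; simp
    rw [h3]
    filter_upwards [h1, hp_ver] with ω h1ω hpω
    rw [h1ω, Pi.sub_apply, h2, ← hpω]
  -- main computation
  have hzero : (fun ω => g1 ω * (μ[fun ω' => Y ω' * A ω'|G]) ω
      + g2 ω * (μ[fun ω' => Y ω' * (1 - A ω')|G]) ω + g3 ω * (μ[A|G]) ω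
      + g4 ω * (μ[fun ω' => 1 - A ω'|G]) ω) =ᵐ[μ] fun _ => (0 : ℝ) := by
    filter_upwards [hpos, hp_ver, hmodel, hE4] with ω hω hpω hmω hE4ω
    have hp0 : p ω ≠ 0 := ne_of_gt (lt_of_lt_of_le hε hω.1)
    have h1p0 : 1 - p ω ≠ 0 := by
      have := hω.2; intro h; rw [sub_eq_zero] at h; rw [← h] at this; linarith
    rw [hE4ω, ← hpω, hg1_def, hg2_def, hg3_def, hg4_def,
      div_mul_cancel₀ _ hp0, div_mul_cancel₀ _ h1p0]
    have hcc : q ω * ((μ[fun ω' => Y ω' * A ω'|G]) ω / p ω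
        - (μ[fun ω' => Y ω' * (1 - A ω')|G]) ω / (1 - p ω)) = q ω * c ω :=
      congrArg (q ω * ·) hmω
    linear_combination hcc
  have hint12 : Integrable (fun ω => g1 ω * (Y ω * A ω) + g2 ω * (Y ω * (1 - A ω))) μ :=
    hint1.add hint2
  have hint123 : Integrable (fun ω => g1 ω * (Y ω * A ω) + g2 ω * (Y ω * (1 - A ω))
      + g3 ω * A ω) μ := hint12.add hint3
  have hintE12 : Integrable (fun ω => g1 ω * (μ[fun ω' => Y ω' * A ω'|G]) ω
      + g2 ω * (μ[fun ω' => Y ω' * (1 - A ω')|G]) ω) μ := hintE1.add hintE2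
  have hintE123 : Integrable (fun ω => g1 ω * (μ[fun ω' => Y ω' * A ω'|G]) ω
      + g2 ω * (μ[fun ω' => Y ω' * (1 - A ω')|G]) ω + g3 ω * (μ[A|G]) ω) μ :=
    hintE12.add hintE3
  -- assemble
  calc ∫ ω, W ω * (A ω - pt ω) * f ω l * (Y ω - η ω - (A ω - pt ω) * c ω) ∂μ
      = ∫ ω, (g1 ω * (Y ω * A ω) + g2 ω * (Y ω * (1 - A ω)) + g3 ω * A ω
          + g4 ω * (1 - A ω)) ∂μ :=
        integral_congr_ae (Filter.Eventually.of_forall hsplit)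
    _ = ((∫ ω, g1 ω * (Y ω * A ω) ∂μ) + ∫ ω, g2 ω * (Y ω * (1 - A ω)) ∂μ)
          + (∫ ω, g3 ω * A ω ∂μ) + ∫ ω, g4 ω * (1 - A ω) ∂μ := by
        rw [integral_add hint123 hint4, integral_add hint12 hint3, integral_add hint1 hint2]
    _ = ((∫ ω, g1 ω * (μ[fun ω' => Y ω' * A ω'|G]) ω ∂μ)
          + ∫ ω, g2 ω * (μ[fun ω' => Y ω' * (1 - A ω')|G]) ω ∂μ)
          + (∫ ω, g3 ω * (μ[A|G]) ω ∂μ) + ∫ ω, g4 ω * (μ[fun ω' => 1 - A ω'|G]) ω ∂μ := by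
        rw [key g1 hg1_meas _ hg1_bdd _ hX1_meas CY hX1_bdd,
          key g2 hg2_meas _ hg2_bdd _ hX2_meas CY hX2_bdd,
          key g3 hg3_meas _ hg3_bdd _ hA_meas 1 habsA,
          key g4 hg4_meas _ hg4_bdd _ hX4_meas 1 habsA']
    _ = ∫ ω, (g1 ω * (μ[fun ω' => Y ω' * A ω'|G]) ω
          + g2 ω * (μ[fun ω' => Y ω' * (1 - A ω')|G]) ω + g3 ω * (μ[A|G]) ω
          + g4 ω * (μ[fun ω' => 1 - A ω'|G]) ω) ∂μ := by
        rw [integral_add hintE123 hintE4, integral_add hintE12 hintE3,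
          integral_add hintE1 hintE2]
    _ = ∫ ω, (0 : ℝ) ∂μ := integral_congr_ae hzero
    _ = 0 := integral_zero _ _
end
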